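/- Let T = ∫⊕_X R(x) dμ(x) be a decomposable operator from V_J to V_{J'}. Then the closure of T(V_J) is the MI space whose range function J'' satisfies J''(x) = closure of R(x)(J(x)) for a.e. x ∈ X, and the kernel of T is the MI space whose range function K satisfies K(x) = ker R(x) for a.e. x ∈ X. -/

import Mathlib

/-!
The kernel statement is fibrewise: `T φ = 0` iff `R(x) φ(x) = 0` for a.e. `x`.
For the range, `T(V_J)` lies in the MI space `V_{J''}`, which is closed, so it suffices to show
that every `ψ ∈ V_{J''}` orthogonal to `T(V_J)` vanishes. Testing `ψ` against `T(𝟙_s P_J u)` for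
all sets `s` of finite measure gives `⟪R(x) P_{J(x)} u, ψ(x)⟫ = 0` for a.e. `x`, for each `u ∈ H`.
Letting `u` run through a countable dense subset of `H`, `ψ(x)` is a.e. orthogonal to
`R(x)(J(x))`, while it lies in the closure of that range; hence `ψ(x) = 0`.
-/

open MeasureTheory
open scoped ENNReal NNReal

noncomputable section

/-- The multiplication-invariant subspace `V_J ⊆ L²(X;H)` determined by a range
function `J`. -/
def VJ {X : Type*} [MeasurableSpace X] (μ : Measure X)
    {H : Type*} [NormedAddCommGroup H] [InnerProductSpace ℂ H]
    (J : X → Submodule ℂ H) : Submodule ℂ (Lp H 2 μ) where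
  carrier := {φ | ∀ᵐ x ∂μ, φ x ∈ J x}
  add_mem' := by
    intro a b ha hb
    simp only [Set.mem_setOf_eq] at ha hb ⊢
    filter_upwards [Lp.coeFn_add a b, ha, hb] with x h1 h2 h3
    rw [h1]
    exact (J x).add_mem h2 h3
  zero_mem' := by
    filter_upwards [Lp.coeFn_zero H 2 μ] with x h1
    rw [h1]
    exact (J x).zero_mem
  smul_mem' := by
    intro c f hf
    show ∀ᵐ x ∂μ, (c • f : Lp H 2 μ) x ∈ J x
    filter_upwards [Lp.coeFn_smul c f, hf] with x h1 h2
    rw [h1]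
    exact (J x).smul_mem c h2

open scoped InnerProductSpace

theorem Submodule.topologicalClosure_eq_of_orthogonal_inf_eq_bot
    {𝕜 E : Type*} [RCLike 𝕜] [NormedAddCommGroup E] [InnerProductSpace 𝕜 E] [CompleteSpace E]
    {U K : Submodule 𝕜 E} (hK : IsClosed (K : Set E)) (hUK : U ≤ K) (h : Uᗮ ⊓ K = ⊥) :
    U.topologicalClosure = K := by
  have : CompleteSpace U.topologicalClosure := U.isClosed_topologicalClosure.completeSpace_coe
  have hsup := Submodule.sup_orthogonal_inf_of_hasOrthogonalProjection
    (U.topologicalClosure_minimal hUK hK)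
  rwa [Submodule.orthogonal_closure, h, sup_bot_eq] at hsup

theorem eq_zero_of_mem_closure_range_of_inner_apply_eq_zero
    {𝕜 E F : Type*} [RCLike 𝕜] [NormedAddCommGroup E] [InnerProductSpace 𝕜 E]
    [NormedAddCommGroup F] [InnerProductSpace 𝕜 F]
    {K : Submodule 𝕜 E} [K.HasOrthogonalProjection] {K' : Submodule 𝕜 F} (A : K →L[𝕜] K')
    {ι : Type*} {e : ι → E} (he : DenseRange e) {w : F}
    (hw : w ∈ (Submodule.map K'.subtype (LinearMap.range (A : K →ₗ[𝕜] K'))).topologicalClosure)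
    (h : ∀ i, ⟪(A (K.orthogonalProjectionOnto (e i)) : F), w⟫_𝕜 = 0) : w = 0 := by
  have hall : (fun u => ⟪(A (K.orthogonalProjectionOnto u) : F), w⟫_𝕜) = fun _ => 0 :=
    he.equalizer (by fun_prop) continuous_const (funext h)
  have hperp : w ∈ (Submodule.map K'.subtype (LinearMap.range (A : K →ₗ[𝕜] K')))ᗮ := by
    rw [Submodule.mem_orthogonal]
    rintro _ ⟨_, ⟨a, rfl⟩, rfl⟩
    simpa using congrFun hall a
  rw [← Submodule.orthogonal_closure] at hperp
  simpa using (Submodule.inf_orthogonal_eq_bot _).le ⟨hw, hperp⟩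

theorem measurable_of_measurable_dist {α β : Type*} [MeasurableSpace α] [PseudoMetricSpace β]
    [SecondCountableTopology β] [MeasurableSpace β] [BorelSpace β] {f : α → β}
    (hf : ∀ y, Measurable fun x => dist (f x) y) : Measurable f := by
  refine measurable_of_isOpen fun U hU => ?_
  set S : Set (Set β) := {B | ∃ y, ∃ r, B = Metric.ball y r ∧ B ⊆ U}
  have hUS : U = ⋃₀ S := by
    refine subset_antisymm (fun z hz => ?_) (Set.sUnion_subset fun B ⟨_, _, _, hBU⟩ => hBU)
    obtain ⟨r, hr, hball⟩ := Metric.isOpen_iff.1 hU z hz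
    exact ⟨_, ⟨z, r, rfl, hball⟩, Metric.mem_ball_self hr⟩
  obtain ⟨C, hCc, hCS, hCU⟩ := TopologicalSpace.isOpen_sUnion_countable S
    fun B ⟨y, r, hB, _⟩ => hB ▸ Metric.isOpen_ball
  rw [hUS, ← hCU, Set.preimage_sUnion]
  refine MeasurableSet.biUnion hCc fun B hB => ?_
  obtain ⟨y, r, rfl, -⟩ := hCS hB
  exact measurableSet_lt (hf y) measurable_const

theorem measurable_orthogonalProjectionOnto_apply {X 𝕜 H : Type*} [MeasurableSpace X] [RCLike 𝕜]
    [NormedAddCommGroup H] [InnerProductSpace 𝕜 H] [MeasurableSpace H] [BorelSpace H]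
    [SecondCountableTopology H] {J : X → Submodule 𝕜 H} [∀ x, CompleteSpace (J x)]
    (hJm : ∀ u v : H, Measurable fun x => ⟪((J x).orthogonalProjectionOnto u : H), v⟫_𝕜)
    (u : H) : Measurable fun x => ((J x).orthogonalProjectionOnto u : H) := by
  refine measurable_of_measurable_dist fun v => ?_
  have hsq : ∀ x, dist ((J x).orthogonalProjectionOnto u : H) v ^ 2 =
      RCLike.re ⟪((J x).orthogonalProjectionOnto u : H), u⟫_𝕜
        - 2 * RCLike.re ⟪((J x).orthogonalProjectionOnto u : H), v⟫_𝕜 + ‖v‖ ^ 2 := fun x => by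
    rw [dist_eq_norm, @norm_sub_sq 𝕜, ← Submodule.starProjection_apply,
      Submodule.re_inner_starProjection_eq_normSq, Submodule.starProjection_apply, Submodule.coe_norm]
  have hm : Measurable fun x => dist ((J x).orthogonalProjectionOnto u : H) v ^ 2 := by
    simp only [hsq]
    fun_prop
  simpa only [Real.sqrt_sq dist_nonneg] using hm.sqrt

section RangeFunction

variable {X : Type*} [MeasurableSpace X] {μ : Measure X}
  {H : Type*} [NormedAddCommGroup H] [InnerProductSpace ℂ H]

theorem mem_VJ_iff {J : X → Submodule ℂ H} {φ : Lp H 2 μ} :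
    φ ∈ VJ μ J ↔ ∀ᵐ x ∂μ, φ x ∈ J x := Iff.rfl

theorem isClosed_VJ {K : X → Submodule ℂ H} (hK : ∀ x, IsClosed (K x : Set H)) :
    IsClosed (VJ μ K : Set (Lp H 2 μ)) := by
  refine IsSeqClosed.isClosed fun f p hf hfp => ?_
  obtain ⟨ns, -, hns⟩ := (tendstoInMeasure_of_tendsto_Lp hfp).exists_seq_tendsto_ae
  have hf' : ∀ᵐ x ∂μ, ∀ n, f (ns n) x ∈ K x := ae_all_iff.2 fun n => hf (ns n)
  filter_upwards [hns, hf'] with x hx hfx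
  exact (hK x).mem_of_tendsto hx (Filter.Eventually.of_forall hfx)

variable {J : X → Submodule ℂ H} [∀ x, CompleteSpace (J x)]

theorem exists_mem_VJ_ae_eq_indicator_orthogonalProjectionOnto [SecondCountableTopology H]
    (hJm : ∀ u v : H, Measurable fun x => ⟪((J x).orthogonalProjectionOnto u : H), v⟫_ℂ)
    (u : H) {s : Set X} (hs : MeasurableSet s) (hμs : μ s < ∞) :
    ∃ φ : VJ μ J, (φ : Lp H 2 μ) =ᵐ[μ]
      s.indicator fun x => ((J x).orthogonalProjectionOnto u : H) := by
  borelize H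
  have : IsFiniteMeasure (μ.restrict s) := isFiniteMeasure_restrict.2 hμs.ne
  have hmem : MemLp (s.indicator fun x => ((J x).orthogonalProjectionOnto u : H)) 2 μ :=
    (memLp_indicator_iff_restrict hs).2 <|
      MemLp.of_bound (measurable_orthogonalProjectionOnto_apply hJm u).aestronglyMeasurable ‖u‖
        (ae_of_all _ fun x => (J x).norm_orthogonalProjectionOnto_apply_le u)
  refine ⟨⟨hmem.toLp _, ?_⟩, hmem.coeFn_toLp⟩
  filter_upwards [hmem.coeFn_toLp] with x hx
  rw [hx]
  by_cases hxs : x ∈ s <;> simp [hxs]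

end RangeFunction

section DirectIntegral

variable {X : Type*} [MeasurableSpace X] {μ : Measure X}
  {H H' : Type*} [NormedAddCommGroup H] [InnerProductSpace ℂ H]
  [NormedAddCommGroup H'] [InnerProductSpace ℂ H']
  {J : X → Submodule ℂ H} {J' : X → Submodule ℂ H'}

/-- `T = ∫⊕ R(x) dμ(x)`. -/
def IsDirectIntegral (μ : Measure X) (R : (x : X) → J x →L[ℂ] J' x)
    (T : VJ μ J →L[ℂ] VJ μ J') : Prop :=
  ∀ φ : VJ μ J, ∀ᵐ x ∂μ, ∀ hx : (φ : Lp H 2 μ) x ∈ J x,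
    (T φ : Lp H' 2 μ) x = R x ⟨(φ : Lp H 2 μ) x, hx⟩

variable {R : (x : X) → J x →L[ℂ] J' x} {T : VJ μ J →L[ℂ] VJ μ J'}

namespace IsDirectIntegral

theorem ae_exists_apply_eq (hT : IsDirectIntegral μ R T) (φ : VJ μ J) :
    ∀ᵐ x ∂μ, ∃ hx : (φ : Lp H 2 μ) x ∈ J x,
      (T φ : Lp H' 2 μ) x = R x ⟨(φ : Lp H 2 μ) x, hx⟩ := by
  filter_upwards [hT φ, φ.2] with x hTx hx using ⟨hx, hTx hx⟩

theorem apply_eq_zero_iff (hT : IsDirectIntegral μ R T) (φ : VJ μ J) :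
    T φ = 0 ↔ (φ : Lp H 2 μ) ∈
      VJ μ fun x => Submodule.map (J x).subtype (LinearMap.ker (R x : J x →ₗ[ℂ] J' x)) := by
  rw [← Submodule.coe_eq_zero, Lp.eq_zero_iff_ae_eq_zero, mem_VJ_iff]
  refine Filter.eventually_congr ?_
  filter_upwards [hT.ae_exists_apply_eq φ] with x ⟨hx, hTx⟩
  simp [hTx, hx]

theorem coe_apply_mem_VJ_closure_range (hT : IsDirectIntegral μ R T) (φ : VJ μ J) :
    (T φ : Lp H' 2 μ) ∈ VJ μ fun x =>
      (Submodule.map (J' x).subtype (LinearMap.range (R x : J x →ₗ[ℂ] J' x))).topologicalClosure := by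
  filter_upwards [hT.ae_exists_apply_eq φ] with x ⟨hx, hTx⟩
  rw [hTx]
  exact Submodule.le_topologicalClosure _ ⟨_, ⟨_, rfl⟩, rfl⟩

theorem exists_coe_apply_ae_eq_indicator [∀ x, CompleteSpace (J x)] [SecondCountableTopology H]
    (hT : IsDirectIntegral μ R T)
    (hJm : ∀ u v : H, Measurable fun x => ⟪((J x).orthogonalProjectionOnto u : H), v⟫_ℂ)
    (u : H) {s : Set X} (hs : MeasurableSet s) (hμs : μ s < ∞) :
    ∃ φ : VJ μ J, (T φ : Lp H' 2 μ) =ᵐ[μ]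
      s.indicator fun x => (R x ((J x).orthogonalProjectionOnto u) : H') := by
  obtain ⟨φ, hφ⟩ := exists_mem_VJ_ae_eq_indicator_orthogonalProjectionOnto hJm u hs hμs
  refine ⟨φ, ?_⟩
  filter_upwards [hT.ae_exists_apply_eq φ, hφ] with x ⟨hx, hTx⟩ hφx
  rw [hTx]
  by_cases hxs : x ∈ s
  · rw [Set.indicator_of_mem hxs] at hφx ⊢
    rw [show (⟨_, hx⟩ : J x) = _ from Subtype.ext hφx]
  · rw [Set.indicator_of_notMem hxs] at hφx ⊢
    rw [show (⟨_, hx⟩ : J x) = 0 from Subtype.ext hφx, map_zero, ZeroMemClass.coe_zero]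

theorem ae_inner_apply_eq_zero_of_forall_inner_eq_zero [SigmaFinite μ] [∀ x, CompleteSpace (J x)]
    [SecondCountableTopology H] (hT : IsDirectIntegral μ R T)
    (hJm : ∀ u v : H, Measurable fun x => ⟪((J x).orthogonalProjectionOnto u : H), v⟫_ℂ)
    {ψ : Lp H' 2 μ} (hψ : ∀ φ, ⟪(T φ : Lp H' 2 μ), ψ⟫_ℂ = 0) (u : H) :
    ∀ᵐ x ∂μ, ⟪(R x ((J x).orthogonalProjectionOnto u) : H'), ψ x⟫_ℂ = 0 := by
  have hloc : ∀ s, MeasurableSet s → μ s < ∞ → ∃ φ : VJ μ J,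
      (s.indicator fun x => ⟪(R x ((J x).orthogonalProjectionOnto u) : H'), ψ x⟫_ℂ)
        =ᵐ[μ] fun x => ⟪(T φ : Lp H' 2 μ) x, ψ x⟫_ℂ := fun s hs hμs => by
    obtain ⟨φ, hφ⟩ := hT.exists_coe_apply_ae_eq_indicator hJm u hs hμs
    refine ⟨φ, ?_⟩
    filter_upwards [hφ] with x hφx
    by_cases hxs : x ∈ s <;> simp [hφx, hxs]
  refine ae_eq_zero_of_forall_setIntegral_eq_of_sigmaFinite (fun s hs hμs => ?_)
    (fun s hs hμs => ?_)
  · obtain ⟨φ, hφ⟩ := hloc s hs hμs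
    exact (integrable_indicator_iff hs).1 ((L2.integrable_inner (T φ : Lp H' 2 μ) ψ).congr hφ.symm)
  · obtain ⟨φ, hφ⟩ := hloc s hs hμs
    rw [← integral_indicator hs, integral_congr_ae hφ, ← L2.inner_def, hψ]

theorem eq_zero_of_mem_VJ_of_forall_inner_eq_zero [SigmaFinite μ] [∀ x, CompleteSpace (J x)]
    [SecondCountableTopology H] (hT : IsDirectIntegral μ R T)
    (hJm : ∀ u v : H, Measurable fun x => ⟪((J x).orthogonalProjectionOnto u : H), v⟫_ℂ)
    {ψ : Lp H' 2 μ} (hψJ : ψ ∈ VJ μ fun x =>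
      (Submodule.map (J' x).subtype (LinearMap.range (R x : J x →ₗ[ℂ] J' x))).topologicalClosure)
    (hψ : ∀ φ, ⟪(T φ : Lp H' 2 μ), ψ⟫_ℂ = 0) : ψ = 0 := by
  rw [Lp.eq_zero_iff_ae_eq_zero]
  have hdense := ae_all_iff.2 fun n =>
    hT.ae_inner_apply_eq_zero_of_forall_inner_eq_zero hJm hψ (TopologicalSpace.denseSeq H n)
  filter_upwards [hdense, hψJ] with x hx hψx
  exact eq_zero_of_mem_closure_range_of_inner_apply_eq_zero (R x)
    (TopologicalSpace.denseRange_denseSeq H) hψx hx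

end IsDirectIntegral

end DirectIntegral

theorem decomposable_range_and_kernel_general
    {X : Type*} [MeasurableSpace X] (μ : Measure X) [SigmaFinite μ]
    {H H' : Type*} [NormedAddCommGroup H] [InnerProductSpace ℂ H]
    [SecondCountableTopology H]
    [NormedAddCommGroup H'] [InnerProductSpace ℂ H'] [CompleteSpace H']
    (J : X → Submodule ℂ H) (J' : X → Submodule ℂ H')
    [∀ x, CompleteSpace ↥(J x)]
    (hJm : ∀ u v : H, Measurable fun x => (inner ℂ ((Submodule.orthogonalProjectionOnto (J x) u : H)) v : ℂ))
    (R : (x : X) → (↥(J x) →L[ℂ] ↥(J' x)))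
    (T : ↥(VJ μ J) →L[ℂ] ↥(VJ μ J'))
    (hT : ∀ φ : ↥(VJ μ J), ∀ᵐ x ∂μ, ∀ hx : (φ : Lp H 2 μ) x ∈ J x,
      ((T φ : Lp H' 2 μ) x) = (R x ⟨(φ : Lp H 2 μ) x, hx⟩ : H'))
    :
    ((VJ μ (fun x => (Submodule.map (J' x).subtype (LinearMap.range (R x : ↥(J x) →ₗ[ℂ] ↥(J' x)))).topologicalClosure)
        : Set (Lp H' 2 μ)) =
      closure (Set.range (fun φ : ↥(VJ μ J) => (T φ : Lp H' 2 μ)))) ∧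
    (∀ φ : ↥(VJ μ J), (T φ = 0 ↔
      (φ : Lp H 2 μ) ∈ VJ μ (fun x => Submodule.map (J x).subtype (LinearMap.ker (R x : ↥(J x) →ₗ[ℂ] ↥(J' x)))))) := by
  have hT' : IsDirectIntegral μ R T := hT
  refine ⟨?_, hT'.apply_eq_zero_iff⟩
  set S := (VJ μ J').subtypeL.comp T
  have hclosure : closure (Set.range fun φ : VJ μ J => (T φ : Lp H' 2 μ)) =
      ((LinearMap.range (S : VJ μ J →ₗ[ℂ] Lp H' 2 μ)).topologicalClosure : Set (Lp H' 2 μ)) :=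
    rfl
  rw [hclosure, Submodule.topologicalClosure_eq_of_orthogonal_inf_eq_bot
    (isClosed_VJ fun x => Submodule.isClosed_topologicalClosure _)]
  · rintro _ ⟨φ, rfl⟩
    exact hT'.coe_apply_mem_VJ_closure_range φ
  · refine eq_bot_iff.2 fun ψ ⟨hψT, hψJ⟩ => (Submodule.mem_bot ℂ).2 ?_
    exact hT'.eq_zero_of_mem_VJ_of_forall_inner_eq_zero hJm hψJ fun φ =>
      Submodule.inner_right_of_mem_orthogonal (LinearMap.mem_range_self _ φ) hψT

/-- for a decomposable operator `T = ∫⊕ R(x) dμ(x) : V_J → V_{J'}`, the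
closure of the range of `T` is the MI space with range function `x ↦ closure (R(x)(J(x)))`,
and the kernel of `T` is the MI space with range function `x ↦ ker R(x)`. -/
theorem decomposable_range_and_kernel
    {X : Type*} [MeasurableSpace X] (μ : Measure X) [SigmaFinite μ]
    [TopologicalSpace.SeparableSpace (Lp ℂ 2 μ)]
    {H H' : Type*} [NormedAddCommGroup H] [InnerProductSpace ℂ H] [CompleteSpace H]
    [SecondCountableTopology H]
    [NormedAddCommGroup H'] [InnerProductSpace ℂ H'] [CompleteSpace H']
    [SecondCountableTopology H']
    (J : X → Submodule ℂ H) (J' : X → Submodule ℂ H')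
    [∀ x, CompleteSpace ↥(J x)] [∀ x, CompleteSpace ↥(J' x)]
    (hJm : ∀ u v : H, Measurable fun x => (inner ℂ ((Submodule.orthogonalProjectionOnto (J x) u : H)) v : ℂ))
    (hJ'm : ∀ u v : H', Measurable fun x => (inner ℂ ((Submodule.orthogonalProjectionOnto (J' x) u : H')) v : ℂ))
    (R : (x : X) → (↥(J x) →L[ℂ] ↥(J' x)))
    (hRm : ∀ (u : H) (v : H'),
      Measurable fun x => (inner ℂ ((R x (Submodule.orthogonalProjectionOnto (J x) u) : H')) v : ℂ))
    (hRb : ∃ C, ∀ᵐ x ∂μ, ‖R x‖ ≤ C)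
    (T : ↥(VJ μ J) →L[ℂ] ↥(VJ μ J'))
    (hT : ∀ φ : ↥(VJ μ J), ∀ᵐ x ∂μ, ∀ hx : (φ : Lp H 2 μ) x ∈ J x,
      ((T φ : Lp H' 2 μ) x) = (R x ⟨(φ : Lp H 2 μ) x, hx⟩ : H'))
    :
    ((VJ μ (fun x => (Submodule.map (J' x).subtype (LinearMap.range (R x : ↥(J x) →ₗ[ℂ] ↥(J' x)))).topologicalClosure)
        : Set (Lp H' 2 μ)) =
      closure (Set.range (fun φ : ↥(VJ μ J) => (T φ : Lp H' 2 μ)))) ∧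
    (∀ φ : ↥(VJ μ J), (T φ = 0 ↔
      (φ : Lp H 2 μ) ∈ VJ μ (fun x => Submodule.map (J x).subtype (LinearMap.ker (R x : ↥(J x) →ₗ[ℂ] ↥(J' x)))))) :=
  decomposable_range_and_kernel_general μ J J' hJm R T hT
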